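/- For every n ≥ 4, the distance between ρ_n = 1^n and η_n = 1^{n-1}0 in the Schreier graph Γ_n satisfies d_{Γ_n}(ρ_n, η_n) ≥ 2^{n-3}. -/

import Mathlib

noncomputable section

/-! ### The Grigorchuk generators -/

namespace Grig

def aFun : List Bool → List Bool
  | [] => []
  | x :: w => (!x) :: w

mutual
  def bFun : List Bool → List Bool
    | [] => []
    | false :: w => false :: aFun w
    | true :: w => true :: cFun w
  def cFun : List Bool → List Bool
    | [] => []
    | false :: w => false :: aFun w
    | true :: w => true :: dFun w
  def dFun : List Bool → List Bool
    | [] => []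
    | false :: w => false :: w
    | true :: w => true :: bFun w
end

theorem aFun_involutive : Function.Involutive aFun := by
  intro w
  match w with
  | [] => rfl
  | x :: w => simp [aFun]

theorem bcd_involutive :
    ∀ w : List Bool, bFun (bFun w) = w ∧ cFun (cFun w) = w ∧ dFun (dFun w) = w := by
  intro w
  induction w with
  | nil => exact ⟨rfl, rfl, rfl⟩
  | cons x w ih =>
    rcases x with _ | _
    · simp [bFun, cFun, dFun, aFun_involutive w]
    · simp [bFun, cFun, dFun, ih.1, ih.2.1, ih.2.2]

theorem bFun_involutive : Function.Involutive bFun := fun w => (bcd_involutive w).1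
theorem cFun_involutive : Function.Involutive cFun := fun w => (bcd_involutive w).2.1
theorem dFun_involutive : Function.Involutive dFun := fun w => (bcd_involutive w).2.2

theorem aFun_length : ∀ w : List Bool, (aFun w).length = w.length := by
  intro w
  match w with
  | [] => rfl
  | x :: w => simp [aFun]

theorem bcd_length : ∀ w : List Bool,
    (bFun w).length = w.length ∧ (cFun w).length = w.length ∧ (dFun w).length = w.length := by
  intro w
  induction w with
  | nil => exact ⟨rfl, rfl, rfl⟩
  | cons x w ih =>
    rcases x with _ | _
    · simp [bFun, cFun, dFun, aFun_length w]
    · simp [bFun, cFun, dFun, ih.1, ih.2.1, ih.2.2]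

theorem bFun_length : ∀ w, (bFun w).length = w.length := fun w => (bcd_length w).1
theorem cFun_length : ∀ w, (cFun w).length = w.length := fun w => (bcd_length w).2.1
theorem dFun_length : ∀ w, (dFun w).length = w.length := fun w => (bcd_length w).2.2

/-- The generators of the first Grigorchuk group as permutations of the vertex set
`{0,1}*` of the rooted binary tree. -/
def aPerm : Equiv.Perm (List Bool) := aFun_involutive.toPerm
def bPerm : Equiv.Perm (List Bool) := bFun_involutive.toPerm
def cPerm : Equiv.Perm (List Bool) := cFun_involutive.toPerm
def dPerm : Equiv.Perm (List Bool) := dFun_involutive.toPerm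

/-- The generating set `S = {a, b, c, d}` (a set of involutions). -/
def Sset : Set (Equiv.Perm (List Bool)) := {aPerm, bPerm, cPerm, dPerm}

/-- The first Grigorchuk group. -/
def Grigorchuk : Subgroup (Equiv.Perm (List Bool)) := Subgroup.closure Sset

/-- Word length with respect to `S = {a, b, c, d}`. -/
def wordLength (g : Equiv.Perm (List Bool)) : ℕ :=
  sInf {k | ∃ l : List (Equiv.Perm (List Bool)),
    (∀ x ∈ l, x ∈ Sset) ∧ l.length = k ∧ l.prod = g}

/-- The growth function of the first Grigorchuk group with respect to `S`. -/
def growthGrig (m : ℕ) : ℕ :=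
  Nat.card {g : Equiv.Perm (List Bool) |
    ∃ l : List (Equiv.Perm (List Bool)), (∀ x ∈ l, x ∈ Sset) ∧ l.length ≤ m ∧ l.prod = g}

/-! ### Level transfer -/

def levelFun (n : ℕ) (f : List Bool → List Bool) (v : Fin n → Bool) : Fin n → Bool :=
  fun i => (f (List.ofFn v)).getD i false

theorem levelFun_involutive (n : ℕ) (f : List Bool → List Bool)
    (hlen : ∀ l, (f l).length = l.length) (hinv : Function.Involutive f) :
    Function.Involutive (levelFun n f) := by
  intro v
  have key : ∀ u : Fin n → Bool, List.ofFn (levelFun n f u) = f (List.ofFn u) := by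
    intro u
    apply List.ext_getElem
    · simp [hlen]
    · intro i h1 h2
      simp only [List.getElem_ofFn]
      simp [levelFun, List.getD_eq_getElem, h2]
  funext i
  simp only [levelFun, key v, hinv (List.ofFn v)]
  simp [List.getD_eq_getElem]

/-- The images `a_n, b_n, c_n, d_n` of the Grigorchuk generators in `Sym(X_n)`,
where the `n`-th level `X_n = {0,1}^n` is identified with `Fin n → Bool`. -/
def aLev (n : ℕ) : Equiv.Perm (Fin n → Bool) :=
  (levelFun_involutive n aFun aFun_length aFun_involutive).toPerm
def bLev (n : ℕ) : Equiv.Perm (Fin n → Bool) :=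
  (levelFun_involutive n bFun bFun_length bFun_involutive).toPerm
def cLev (n : ℕ) : Equiv.Perm (Fin n → Bool) :=
  (levelFun_involutive n cFun cFun_length cFun_involutive).toPerm
def dLev (n : ℕ) : Equiv.Perm (Fin n → Bool) :=
  (levelFun_involutive n dFun dFun_length dFun_involutive).toPerm

end Grig

/-! ### The boundary action and actions of words -/

/-- The (continuous extension to the boundary `∂T = {0,1}^ℕ` of the) action of a tree
automorphism on the boundary of the rooted binary tree. -/
def boundaryAct (g : Equiv.Perm (List Bool)) (ξ : ℕ → Bool) : ℕ → Bool :=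
  fun n => (g (List.ofFn fun i : Fin (n + 1) => ξ i)).getD n false

/-- Applying a word of generators to a vertex, letter by letter: the right action of the
word `l` (the generators in `S` are involutions). -/
def wordApply (l : List (Equiv.Perm (List Bool))) (v : List Bool) : List Bool :=
  l.foldl (fun v s => s v) v

/-- The right action of a word on a boundary point. -/
def wordApplyB (l : List (Equiv.Perm (List Bool))) (ξ : ℕ → Bool) : ℕ → Bool :=
  l.foldl (fun ξ s => boundaryAct s ξ) ξ

/-- The boundary point `ρ = 1^∞`. -/
def rhoInf : ℕ → Bool := fun _ => true

/-- The vertex `ρ_n = 1^n` of the `n`-th level. -/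
def rhoVertex (n : ℕ) : List Bool := List.replicate n true

/-- The vertex `η_n = 1^{n-1}0` of the `n`-th level. -/
def etaVertex (n : ℕ) : List Bool := List.replicate (n - 1) true ++ [false]
/-- The distance from `ρ_n` to `η_n` in the Schreier graph `Γ_n` of the action of the
Grigorchuk group on the `n`-th level `X_n` with respect to `S = {a,b,c,d}`: the least
length of a word over `S` carrying `ρ_n` to `η_n`. -/
noncomputable def schreierDist (n : ℕ) : ℕ :=
  sInf {k | ∃ l : List (Equiv.Perm (List Bool)),
    (∀ x ∈ l, x ∈ Grig.Sset) ∧ l.length = k ∧ wordApply l (rhoVertex n) = etaVertex n}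

/-! The Schreier graph `Γ_n` is a path on `2^n` vertices, and `grayIndex` is the position of a
vertex along it: the number whose binary reflected Gray code, least significant digit first, is
the word with every letter complemented. The `a`-edges join the positions `2k` and `2k + 1`, the `b`-, `c`- and `d`-edges join
`2k + 1` and `2k + 2` (or are loops), so no generator moves the position by more than one.
Since `ρ_n` sits at position `0` and `η_n` at position `2^n - 1`, any word carrying one to the
other has length at least `2^n - 1 ≥ 2^(n-3)`. -/

theorem apply_wordApply_le_add_length (f : List Bool → ℕ) {l : List (Equiv.Perm (List Bool))}
    (hl : ∀ s ∈ l, ∀ w, f (s w) ≤ f w + 1) (v : List Bool) :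
    f (wordApply l v) ≤ f v + l.length := by
  induction l generalizing v with
  | nil => rfl
  | cons s l ih =>
    have hs := hl s List.mem_cons_self v
    have := ih (fun t ht => hl t (List.mem_cons_of_mem s ht)) (s v)
    simp only [wordApply, List.foldl_cons, List.length_cons] at this ⊢
    omega

namespace Grig

def grayIndex : List Bool → ℕ
  | [] => 0
  | true :: w => 2 * grayIndex w + grayIndex w % 2
  | false :: w => 2 * grayIndex w + (grayIndex w + 1) % 2

theorem grayIndex_cons_div_two (x : Bool) (w : List Bool) :
    grayIndex (x :: w) / 2 = grayIndex w := by
  cases x <;> simp only [grayIndex] <;> omega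

theorem grayIndex_aFun_div_two (w : List Bool) : grayIndex (aFun w) / 2 = grayIndex w / 2 := by
  cases w with
  | nil => rfl
  | cons x w => simp only [aFun, grayIndex_cons_div_two]

theorem grayIndex_bFun_cFun_dFun_succ_div_two (w : List Bool) :
    (grayIndex (bFun w) + 1) / 2 = (grayIndex w + 1) / 2 ∧
    (grayIndex (cFun w) + 1) / 2 = (grayIndex w + 1) / 2 ∧
    (grayIndex (dFun w) + 1) / 2 = (grayIndex w + 1) / 2 := by
  induction w with
  | nil => simp only [bFun, cFun, dFun, and_self]
  | cons x w ih =>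
    cases x
    · clear ih
      have ha := grayIndex_aFun_div_two w
      simp only [bFun, cFun, dFun, grayIndex, and_self, and_true]
      omega
    · obtain ⟨hb, hc, hd⟩ := ih
      simp only [bFun, cFun, dFun, grayIndex]
      omega

theorem grayIndex_apply_le_of_mem_Sset {s : Equiv.Perm (List Bool)} (hs : s ∈ Sset)
    (w : List Bool) : grayIndex (s w) ≤ grayIndex w + 1 := by
  have hbcd := grayIndex_bFun_cFun_dFun_succ_div_two w
  rcases hs with rfl | rfl | rfl | rfl
  · have ha := grayIndex_aFun_div_two w
    change grayIndex (aFun w) ≤ _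
    omega
  · have hb := hbcd.1
    change grayIndex (bFun w) ≤ _
    omega
  · have hc := hbcd.2.1
    change grayIndex (cFun w) ≤ _
    omega
  · have hd := hbcd.2.2
    change grayIndex (dFun w) ≤ _
    omega

theorem grayIndex_rhoVertex (n : ℕ) : grayIndex (rhoVertex n) = 0 := by
  induction n with
  | zero => rfl
  | succ n ih => simp only [rhoVertex, List.replicate_succ, grayIndex] at ih ⊢; omega

theorem grayIndex_etaVertex {n : ℕ} (hn : 1 ≤ n) : grayIndex (etaVertex n) = 2 ^ n - 1 := by
  obtain ⟨m, rfl⟩ := Nat.exists_eq_add_of_le' hn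
  simp only [etaVertex, Nat.add_sub_cancel]
  clear hn
  induction m with
  | zero => rfl
  | succ m ih =>
    simp only [List.replicate_succ, List.cons_append, grayIndex] at ih ⊢
    have := Nat.one_le_two_pow (n := m + 1)
    rw [ih, pow_succ 2 (m + 1)]
    omega

inductive Generator | a | b | c | d

namespace Generator

def toPerm : Generator → Equiv.Perm (List Bool)
  | a => aPerm
  | b => bPerm
  | c => cPerm
  | d => dPerm

theorem toPerm_mem_Sset (g : Generator) : g.toPerm ∈ Sset := by
  cases g <;> simp [toPerm, Sset]

def lift : Generator → List Generator
  | a => [a, b, a]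
  | b => [d]
  | c => [b]
  | d => [c]

theorem wordApply_map_toPerm_flatMap_lift (l : List Generator) (w : List Bool) :
    wordApply ((l.flatMap lift).map toPerm) (true :: w) = true :: wordApply (l.map toPerm) w := by
  induction l generalizing w with
  | nil => rfl
  | cons g l ih =>
    simp only [List.flatMap_cons, List.map_append, List.map_cons, wordApply, List.foldl_append]
    cases g <;>
      simp only [lift, toPerm, List.map_cons, List.map_nil, List.foldl_cons, List.foldl_nil,
        aPerm, bPerm, cPerm, dPerm, Function.Involutive.coe_toPerm, aFun, bFun, cFun, dFun,
        Bool.not_true, Bool.not_false] <;>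
      exact ih _

def liftPow : ℕ → List Generator
  | 0 => [a]
  | m + 1 => (liftPow m).flatMap lift

theorem wordApply_liftPow (m : ℕ) :
    wordApply ((liftPow m).map toPerm) (rhoVertex (m + 1)) = etaVertex (m + 1) := by
  induction m with
  | zero => rfl
  | succ m ih =>
    simp only [rhoVertex, etaVertex, Nat.add_sub_cancel, List.replicate_succ] at ih ⊢
    rw [liftPow, wordApply_map_toPerm_flatMap_lift, ih, List.cons_append]

end Generator

theorem two_pow_sub_one_le_schreierDist {n : ℕ} (hn : 1 ≤ n) : 2 ^ n - 1 ≤ schreierDist n := by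
  obtain ⟨m, rfl⟩ := Nat.exists_eq_add_of_le' hn
  have hmem : ∀ s ∈ (Generator.liftPow m).map Generator.toPerm, s ∈ Sset := by
    simp only [List.mem_map]
    rintro _ ⟨g, -, rfl⟩
    exact g.toPerm_mem_Sset
  -- `sInf ∅ = 0`: the word `liftPow m` shows that `ρ_n` and `η_n` are connected at all.
  refine le_csInf ⟨_, _, hmem, rfl, Generator.wordApply_liftPow m⟩ ?_
  rintro k ⟨l, hl, rfl, hlv⟩
  have := apply_wordApply_le_add_length grayIndex
    (fun s hs => grayIndex_apply_le_of_mem_Sset (hl s hs)) (rhoVertex (m + 1))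
  rw [hlv, grayIndex_rhoVertex, grayIndex_etaVertex hn] at this
  omega

end Grig

/-- For every `n ≥ 4` the distance between `ρ_n = 1^n` and `η_n = 1^{n-1}0` in `Γ_n`
is at least `2^{n-3}`. -/
theorem separation (n : ℕ) (hn : 4 ≤ n) : 2 ^ (n - 3) ≤ schreierDist n := by
  have hdist := Grig.two_pow_sub_one_le_schreierDist (n := n) (by omega)
  have hpow := Nat.pow_lt_pow_right (a := 2) (by norm_num) (show n - 3 < n by omega)
  omega

end
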